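/- Let p be an odd prime, K ≥ 1 an integer, and T ⊆ Q_p a K-thick set, meaning that for every integer l, T intersects p^{-(K+l)} Z_p \ p^{-l} Z_p nontrivially. Let f ∈ Z_p[t] (or with coefficients in an unramified quadratic extension of Q_p) be a polynomial of degree d ≥ 1. Then for all sufficiently large m, p^{-Kd} · max_{t ∈ B_m} |f(t)|_p ≤ max_{t ∈ T ∩ B_m} |f(t)|_p, where B_m = p^{-m} Z_p. -/

import Mathlib

/-!
Let `a` be the leading coefficient of `f`. Since the coefficients of `f` are integral, the
ultrametric inequality shows that once `‖t‖ ≥ 1` and `|a|·‖t‖ > 1` the leading term strictly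
dominates, so `‖f(t)‖ = |a|·‖t‖^d`, while on a ball `B_m` with `|a|·p^m ≥ 1` we have
`‖f‖ ≤ |a|·p^{md}`. For `m - K` large, thickness gives `t₀ ∈ T ∩ B_m` with `‖t₀‖ > p^{m-K}`,
hence `‖f(t₀)‖ ≥ |a|·p^{(m-K)d} ≥ p^{-Kd} · max_{B_m} ‖f‖`.
-/

/-- A set `T ⊆ ℚ_p` is `K`-thick if for every `l ∈ ℤ` it meets
`p^{-(K+l)} ℤ_p − p^{-l} ℤ_p = {t : p^l < ‖t‖ ≤ p^{K+l}}`. -/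
def IsKThick (p : ℕ) [Fact (Nat.Prime p)] (K : ℕ) (T : Set ℚ_[p]) : Prop :=
  ∀ l : ℤ, ∃ t ∈ T, (p : ℝ) ^ l < ‖t‖ ∧ ‖t‖ ≤ (p : ℝ) ^ ((K : ℤ) + l)

open Finset IsUltrametricDist Polynomial

namespace Polynomial

theorem eval_eq_sum_range_add_leadingCoeff_mul {R : Type*} [Semiring R] (g : R[X]) (t : R) :
    g.eval t = ∑ i ∈ range g.natDegree, g.coeff i * t ^ i + g.leadingCoeff * t ^ g.natDegree := by
  rw [eval_eq_sum_range, sum_range_succ, coeff_natDegree]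

variable {𝕜 : Type*} [NormedField 𝕜] [IsUltrametricDist 𝕜]

theorem mul_norm_sum_range_mul_pow_le {c : ℕ → 𝕜} (hc : ∀ i, ‖c i‖ ≤ 1) {r : ℝ} (hr : 1 ≤ r)
    {t : 𝕜} (ht : ‖t‖ ≤ r) (n : ℕ) : r * ‖∑ i ∈ range n, c i * t ^ i‖ ≤ r ^ n := by
  have hr0 : 0 < r := one_pos.trans_le hr
  rw [mul_comm, ← le_div_iff₀ hr0]
  refine norm_sum_le_of_forall_le_of_nonneg (by positivity) fun i hi => ?_
  rw [le_div_iff₀ hr0, norm_mul, norm_pow]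
  calc ‖c i‖ * ‖t‖ ^ i * r ≤ 1 * r ^ i * r := by gcongr; exact hc i
    _ = r ^ (i + 1) := by ring
    _ ≤ r ^ n := pow_le_pow_right₀ hr (mem_range.mp hi)

variable {g : 𝕜[X]}

theorem norm_eval_le_of_norm_coeff_le_one (hg : ∀ i, ‖g.coeff i‖ ≤ 1) {r : ℝ} (hr : 1 ≤ r)
    (hlead : 1 ≤ ‖g.leadingCoeff‖ * r) {t : 𝕜} (ht : ‖t‖ ≤ r) :
    ‖g.eval t‖ ≤ ‖g.leadingCoeff‖ * r ^ g.natDegree := by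
  have hlow := mul_norm_sum_range_mul_pow_le hg hr ht g.natDegree
  rw [eval_eq_sum_range_add_leadingCoeff_mul]
  refine (norm_add_le_max _ _).trans (max_le ?_ ?_)
  · nlinarith [norm_nonneg (∑ i ∈ range g.natDegree, g.coeff i * t ^ i), norm_nonneg g.leadingCoeff]
  · rw [norm_mul, norm_pow]
    gcongr

theorem norm_eval_eq_of_norm_coeff_le_one (hg : ∀ i, ‖g.coeff i‖ ≤ 1) {t : 𝕜} (ht : 1 ≤ ‖t‖)
    (hlead : 1 < ‖g.leadingCoeff‖ * ‖t‖) :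
    ‖g.eval t‖ = ‖g.leadingCoeff‖ * ‖t‖ ^ g.natDegree := by
  have hlow := mul_norm_sum_range_mul_pow_le hg ht le_rfl g.natDegree
  have htop : ‖g.leadingCoeff * t ^ g.natDegree‖ = ‖g.leadingCoeff‖ * ‖t‖ ^ g.natDegree := by
    rw [norm_mul, norm_pow]
  have hlt : ‖∑ i ∈ range g.natDegree, g.coeff i * t ^ i‖ < ‖g.leadingCoeff * t ^ g.natDegree‖ := by
    rw [htop]
    have : 0 < ‖t‖ ^ g.natDegree := by positivity
    nlinarith [norm_nonneg (∑ i ∈ range g.natDegree, g.coeff i * t ^ i)]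
  rw [eval_eq_sum_range_add_leadingCoeff_mul, norm_add_eq_max_of_norm_ne_norm hlt.ne,
    max_eq_right hlt.le, htop]

theorem pow_mul_sSup_norm_eval_le (hg : ∀ i, ‖g.coeff i‖ ≤ 1) {r R : ℝ} (hr : 1 ≤ r)
    (hlead : 1 < ‖g.leadingCoeff‖ * r) (hrR : r ≤ R) {s : Set 𝕜} {t₀ : 𝕜} (ht₀s : t₀ ∈ s)
    (hrt₀ : r < ‖t₀‖) (ht₀R : ‖t₀‖ ≤ R) :
    r ^ g.natDegree * sSup ((fun t => ‖g.eval t‖) '' {t | ‖t‖ ≤ R}) ≤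
      R ^ g.natDegree * sSup ((fun t => ‖g.eval t‖) '' (s ∩ {t | ‖t‖ ≤ R})) := by
  set a := ‖g.leadingCoeff‖
  set d := g.natDegree
  have hball (t : 𝕜) (ht : ‖t‖ ≤ R) : ‖g.eval t‖ ≤ a * R ^ d :=
    norm_eval_le_of_norm_coeff_le_one hg (hr.trans hrR) (hlead.le.trans (by gcongr)) ht
  have ha : 0 < a := by nlinarith
  have hR : 0 < R := one_pos.trans_le (hr.trans hrR)
  have hbdd : BddAbove ((fun t => ‖g.eval t‖) '' (s ∩ {t | ‖t‖ ≤ R})) :=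
    ⟨a * R ^ d, by rintro _ ⟨t, ⟨-, ht⟩, rfl⟩; exact hball t ht⟩
  calc r ^ d * sSup ((fun t => ‖g.eval t‖) '' {t | ‖t‖ ≤ R})
      ≤ r ^ d * (a * R ^ d) := by
        gcongr
        exact Real.sSup_le (by rintro _ ⟨t, ht, rfl⟩; exact hball t ht) (by positivity)
    _ = R ^ d * (a * r ^ d) := by ring
    _ ≤ R ^ d * (a * ‖t₀‖ ^ d) := by gcongr
    _ = R ^ d * ‖g.eval t₀‖ := by
        rw [norm_eval_eq_of_norm_coeff_le_one hg (hr.trans hrt₀.le) (hlead.trans (by gcongr))]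
    _ ≤ R ^ d * sSup ((fun t => ‖g.eval t‖) '' (s ∩ {t | ‖t‖ ≤ R})) := by
        gcongr
        exact le_csSup hbdd ⟨t₀, ⟨ht₀s, ht₀R⟩, rfl⟩

end Polynomial

theorem PadicInt.norm_coeff_map_coe_le_one {p : ℕ} [Fact p.Prime] (f : ℤ_[p][X]) (i : ℕ) :
    ‖(f.map (PadicInt.Coe.ringHom (p := p))).coeff i‖ ≤ 1 := by
  rw [coeff_map]
  exact (padic_norm_e_of_padicInt _).trans_le (norm_le_one _)

theorem stmt2_general (p : ℕ) [Fact (Nat.Prime p)]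
    (K : ℕ) (T : Set ℚ_[p]) (hT : IsKThick p K T)
    (f : Polynomial ℤ_[p]) :
    ∃ M : ℕ, ∀ m : ℕ, M ≤ m →
      (p : ℝ) ^ (-((K : ℤ) * (f.natDegree : ℤ))) *
          sSup ((fun t : ℚ_[p] => ‖(f.map (PadicInt.Coe.ringHom (p := p))).eval t‖) ''
            {t : ℚ_[p] | ‖t‖ ≤ (p : ℝ) ^ m}) ≤
        sSup ((fun t : ℚ_[p] => ‖(f.map (PadicInt.Coe.ringHom (p := p))).eval t‖) ''
          (T ∩ {t : ℚ_[p] | ‖t‖ ≤ (p : ℝ) ^ m})) := by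
  set g : ℚ_[p][X] := f.map (PadicInt.Coe.ringHom (p := p))
  rw [← natDegree_map_eq_of_injective (f := PadicInt.Coe.ringHom) (fun x y h => Subtype.ext h) f]
  rcases eq_or_ne g 0 with hg0 | hg0
  · refine ⟨0, fun m _ => ?_⟩
    simp only [hg0, eval_zero, norm_zero]
    exact (mul_nonpos_of_nonneg_of_nonpos (by positivity) (Real.sSup_nonpos (by simp))).trans
      (Real.sSup_nonneg (by rintro _ ⟨_, _, rfl⟩; rfl))
  have hp : (1 : ℝ) < p := by exact_mod_cast (Fact.out : p.Prime).one_lt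
  have ha : 0 < ‖g.leadingCoeff‖ := norm_pos_iff.mpr (leadingCoeff_ne_zero.mpr hg0)
  obtain ⟨N, hN⟩ := pow_unbounded_of_one_lt ‖g.leadingCoeff‖⁻¹ hp
  refine ⟨K + N, fun m hm => ?_⟩
  obtain ⟨n, hNn, rfl⟩ : ∃ n, N ≤ n ∧ m = K + n := ⟨m - K, by omega, by omega⟩
  obtain ⟨t₀, ht₀T, hnt₀, ht₀Kn⟩ := hT n
  rw [zpow_natCast] at hnt₀
  rw [← Nat.cast_add, zpow_natCast] at ht₀Kn
  have hlead : 1 < ‖g.leadingCoeff‖ * (p : ℝ) ^ n :=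
    (inv_lt_iff_one_lt_mul₀' ha).mp (hN.trans_le (pow_le_pow_right₀ hp.le hNn))
  have hscale : (p : ℝ) ^ (-((K : ℤ) * (g.natDegree : ℤ))) =
      ((p : ℝ) ^ n) ^ g.natDegree / ((p : ℝ) ^ (K + n)) ^ g.natDegree := by
    rw [zpow_neg, show (K : ℤ) * g.natDegree = ((K * g.natDegree : ℕ) : ℤ) by push_cast; ring,
      zpow_natCast]
    field_simp
    ring
  rw [hscale, div_mul_eq_mul_div, div_le_iff₀' (by positivity)]
  exact pow_mul_sSup_norm_eval_le (PadicInt.norm_coeff_map_coe_le_one f) (one_le_pow₀ hp.le)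
    hlead (pow_le_pow_right₀ hp.le (by omega)) ht₀T hnt₀ ht₀Kn

/-- For a `K`-thick set `T ⊆ ℚ_p` and a polynomial `f` of degree `d ≥ 1` with
`ℤ_p`-coefficients, for all sufficiently large `m`:
`p^{-Kd} · max_{t ∈ B_m} ‖f(t)‖ ≤ max_{t ∈ T ∩ B_m} ‖f(t)‖`. -/
theorem stmt2 (p : ℕ) [Fact (Nat.Prime p)] (hp : Odd p)
    (K : ℕ) (hK : 1 ≤ K) (T : Set ℚ_[p]) (hT : IsKThick p K T)
    (f : Polynomial ℤ_[p]) (hd : 1 ≤ f.natDegree) :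
    ∃ M : ℕ, ∀ m : ℕ, M ≤ m →
      (p : ℝ) ^ (-((K : ℤ) * (f.natDegree : ℤ))) *
          sSup ((fun t : ℚ_[p] => ‖(f.map (PadicInt.Coe.ringHom (p := p))).eval t‖) ''
            {t : ℚ_[p] | ‖t‖ ≤ (p : ℝ) ^ m}) ≤
        sSup ((fun t : ℚ_[p] => ‖(f.map (PadicInt.Coe.ringHom (p := p))).eval t‖) ''
          (T ∩ {t : ℚ_[p] | ‖t‖ ≤ (p : ℝ) ^ m})) :=
  stmt2_general p K T hT f
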